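/- Let μ be a Radon measure on ℝ, x ∈ spt μ, and suppose there exist c_i > 0 and r_i ↘ 0 such that c_i T_{x,r_i♯}μ → L⁺ weakly, where L⁺ = L⌞[0,∞) is the Heaviside measure. Then there is a subsequence (i_j) such that μ(B(x,r_{i_j}))^{−1} T_{x,r_{i_j}♯}μ → L⁺ weakly as j → ∞. -/

import Mathlib

/-
Testing weak convergence against continuous cut-offs squeezed between the indicator of a
compact set `K` and that of a thickening of `K` gives the portmanteau inequalities
`limsup μᵢ K ≤ ν K` for compact `K` and `ν U ≤ liminf μᵢ U` for bounded open `U`. Since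
`{-1, 1}` is `L⁺`-null, the masses `cᵢ μ(B(x, rᵢ)) = cᵢ T_{x,rᵢ♯}μ (B(0, 1))` therefore
tend to `L⁺(B(0, 1)) = 1`, and dividing `cᵢ T_{x,rᵢ♯}μ` by them does not change the weak limit:
the whole sequence converges.
-/

open MeasureTheory Filter Topology Metric Set

noncomputable section

/-- Weak convergence of a sequence of Radon measures on ℝ, tested against
continuous compactly supported functions. -/
def WeakTendstoR (μs : ℕ → Measure ℝ) (ν : Measure ℝ) : Prop :=
  ∀ φ : ℝ → ℝ, Continuous φ → HasCompactSupport φ →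
    Tendsto (fun i => ∫ x, φ x ∂(μs i)) atTop (𝓝 (∫ x, φ x ∂ν))

/-- The measure `c • T_{x,r♯} μ`, where `T_{x,r♯}μ(A) = μ(rA + x)`. -/
def blowupR (μ : Measure ℝ) (x r c : ℝ) : Measure ℝ :=
  ENNReal.ofReal c • Measure.map (fun y => (y - x) / r) μ

/-- `ν` is a tangent measure of `μ` at `x`: `ν` is a non-zero Radon measure and
`c_i T_{x,r_i♯}μ → ν` weakly for some `r_i ↘ 0`, `c_i > 0`. -/
def IsTangentMeasureR (μ : Measure ℝ) (x : ℝ) (ν : Measure ℝ) : Prop :=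
  IsLocallyFiniteMeasure ν ∧ ν ≠ 0 ∧
    ∃ r c : ℕ → ℝ, (∀ i, 0 < r i) ∧ StrictAnti r ∧ Tendsto r atTop (𝓝 0) ∧
      (∀ i, 0 < c i) ∧ WeakTendstoR (fun i => blowupR μ x (r i) (c i)) ν

/-- The support of a measure on ℝ. -/
def sptR (μ : Measure ℝ) : Set ℝ := {x | ∀ r > 0, 0 < μ (closedBall x r)}

/-- The Heaviside measure `L⁺ = L ⌞ [0,∞)`. -/
def heaviside : Measure ℝ := volume.restrict (Ici 0)

open scoped ENNReal

section ThickenedIndicator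

variable {α : Type*} [MetricSpace α]

lemma continuous_coe_thickenedIndicator {δ : ℝ} (hδ : 0 < δ) (E : Set α) :
    Continuous fun y => (thickenedIndicator hδ E y : ℝ) :=
  NNReal.continuous_coe.comp (thickenedIndicator hδ E).continuous

variable [ProperSpace α]

lemma hasCompactSupport_coe_thickenedIndicator {δ : ℝ} (hδ : 0 < δ) {K : Set α}
    (hK : IsCompact K) : HasCompactSupport fun y => (thickenedIndicator hδ K y : ℝ) :=
  HasCompactSupport.intro hK.cthickening fun _ hy => by
    rw [thickenedIndicator_zero hδ K fun h => hy (thickening_subset_cthickening δ K h),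
      NNReal.coe_zero]

variable [MeasurableSpace α] [BorelSpace α]

lemma measureReal_le_integral_thickenedIndicator (μ : Measure α) [IsFiniteMeasureOnCompacts μ]
    {δ : ℝ} (hδ : 0 < δ) {K : Set α} (hK : IsCompact K) :
    μ.real K ≤ ∫ y, (thickenedIndicator hδ K y : ℝ) ∂μ := by
  rw [← integral_indicator_one hK.measurableSet]
  refine integral_mono ((integrable_indicator_iff hK.measurableSet).2
    (integrableOn_const hK.measure_ne_top))
    ((continuous_coe_thickenedIndicator hδ K).integrable_of_hasCompactSupport
      (hasCompactSupport_coe_thickenedIndicator hδ hK)) fun y => ?_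
  by_cases hy : y ∈ K
  · simp [hy, thickenedIndicator_one hδ K hy]
  · simp [hy]

lemma integral_thickenedIndicator_le_measureReal (μ : Measure α) [IsFiniteMeasureOnCompacts μ]
    {δ : ℝ} (hδ : 0 < δ) {K U : Set α} (hK : IsCompact K) (hU : MeasurableSet U)
    (hμU : μ U ≠ ⊤) (hKU : cthickening δ K ⊆ U) :
    ∫ y, (thickenedIndicator hδ K y : ℝ) ∂μ ≤ μ.real U := by
  rw [← integral_indicator_one hU]
  refine integral_mono ((continuous_coe_thickenedIndicator hδ K).integrable_of_hasCompactSupport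
      (hasCompactSupport_coe_thickenedIndicator hδ hK))
    ((integrable_indicator_iff hU).2 (integrableOn_const hμU)) fun y => ?_
  by_cases hy : y ∈ U
  · simpa [hy] using thickenedIndicator_le_one hδ K y
  · have : y ∉ thickening δ K := fun h => hy (hKU (thickening_subset_cthickening δ K h))
    simp [hy, thickenedIndicator_zero hδ K this]

end ThickenedIndicator

section WeakConvergence

variable {μs : ℕ → Measure ℝ} {ν : Measure ℝ} [∀ i, IsFiniteMeasureOnCompacts (μs i)]
  [IsFiniteMeasureOnCompacts ν]

lemma WeakTendstoR.eventually_measureReal_lt (h : WeakTendstoR μs ν) {K : Set ℝ}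
    (hK : IsCompact K) {b : ℝ} (hb : ν.real K < b) : ∀ᶠ i in atTop, (μs i).real K < b := by
  obtain ⟨δ, hδb, hδ⟩ : ∃ δ, ν.real (cthickening δ K) < b ∧ 0 < δ := by
    have hlim := ((ENNReal.tendsto_toReal hK.measure_ne_top).comp
      (tendsto_measure_cthickening_of_isCompact (μ := ν) hK)).mono_left
        (nhdsWithin_le_nhds (s := Ioi 0))
    exact ((hlim.eventually (gt_mem_nhds hb)).and (self_mem_nhdsWithin (s := Ioi 0))).exists
  have hνb : ∫ y, (thickenedIndicator hδ K y : ℝ) ∂ν < b :=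
    (integral_thickenedIndicator_le_measureReal ν hδ hK hK.cthickening.measurableSet
      hK.cthickening.measure_ne_top subset_rfl).trans_lt hδb
  filter_upwards [(h _ (continuous_coe_thickenedIndicator hδ K)
    (hasCompactSupport_coe_thickenedIndicator hδ hK)).eventually (gt_mem_nhds hνb)] with i hi
  exact (measureReal_le_integral_thickenedIndicator (μs i) hδ hK).trans_lt hi

lemma WeakTendstoR.eventually_lt_measureReal [ν.InnerRegularCompactLTTop]
    (h : WeakTendstoR μs ν) {U : Set ℝ} (hU : IsOpen U) (hUb : Bornology.IsBounded U) {a : ℝ}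
    (ha : a < ν.real U) : ∀ᶠ i in atTop, a < (μs i).real U := by
  rcases lt_or_ge a 0 with ha0 | ha0
  · exact Eventually.of_forall fun i => ha0.trans_le measureReal_nonneg
  obtain ⟨K, hKU, hK, haK⟩ := hU.measurableSet.exists_lt_isCompact_of_ne_top
    hUb.measure_lt_top.ne ((ENNReal.ofReal_lt_iff_lt_toReal ha0 hUb.measure_lt_top.ne).2 ha)
  rw [ENNReal.ofReal_lt_iff_lt_toReal ha0 hK.measure_ne_top] at haK
  obtain ⟨δ, hδ, hKδU⟩ := hK.exists_cthickening_subset_open hU hKU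
  have hνa : a < ∫ y, (thickenedIndicator hδ K y : ℝ) ∂ν :=
    haK.trans_le (measureReal_le_integral_thickenedIndicator ν hδ hK)
  filter_upwards [(h _ (continuous_coe_thickenedIndicator hδ K)
    (hasCompactSupport_coe_thickenedIndicator hδ hK)).eventually (lt_mem_nhds hνa)] with i hi
  exact hi.trans_le (integral_thickenedIndicator_le_measureReal (μs i) hδ hK hU.measurableSet
    hUb.measure_lt_top.ne hKδU)

lemma WeakTendstoR.tendsto_measureReal_of_null_frontier [ν.InnerRegularCompactLTTop]
    (h : WeakTendstoR μs ν) {S : Set ℝ} (hS : Bornology.IsBounded S)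
    (hSν : ν (frontier S) = 0) : Tendsto (fun i => (μs i).real S) atTop (𝓝 (ν.real S)) := by
  refine tendsto_order.2 ⟨fun a ha => ?_, fun b hb => ?_⟩
  · rw [measureReal_def, ← measure_interior_of_null_frontier hSν, ← measureReal_def] at ha
    filter_upwards [h.eventually_lt_measureReal isOpen_interior (hS.subset interior_subset) ha]
      with i hi
    exact hi.trans_le (measureReal_mono interior_subset hS.measure_lt_top.ne)
  · rw [measureReal_def, ← measure_closure_of_null_frontier hSν, ← measureReal_def] at hb
    filter_upwards [h.eventually_measureReal_lt hS.isCompact_closure hb] with i hi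
    exact (measureReal_mono subset_closure hS.isCompact_closure.measure_ne_top).trans_lt hi

end WeakConvergence

lemma heaviside_closedBall_zero_one : heaviside (closedBall 0 1) = 1 := by
  have : closedBall (0 : ℝ) 1 ∩ Ici 0 = Icc 0 1 := by
    ext y
    simp only [mem_inter_iff, mem_closedBall, Real.dist_eq, sub_zero, abs_le, mem_Icc,
      mem_Ici]
    grind
  rw [heaviside, Measure.restrict_apply measurableSet_closedBall, this, Real.volume_Icc]
  norm_num

lemma heaviside_sphere (y r : ℝ) : heaviside (sphere y r) = 0 :=
  nonpos_iff_eq_zero.1 <|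
    (Measure.restrict_apply_le _ _).trans_eq (Measure.addHaar_sphere volume y r)

instance innerRegularCompactLTTop_heaviside : heaviside.InnerRegularCompactLTTop := by
  unfold heaviside; infer_instance

instance isFiniteMeasureOnCompacts_heaviside : IsFiniteMeasureOnCompacts heaviside := by
  unfold heaviside; infer_instance

lemma preimage_div_sub_closedBall_zero_one (x : ℝ) {r : ℝ} (hr : 0 < r) :
    (fun y => (y - x) / r) ⁻¹' closedBall 0 1 = closedBall x r := by
  ext y
  simp [abs_of_pos hr, div_le_one hr, Real.dist_eq]

lemma isFiniteMeasureOnCompacts_blowupR (μ : Measure ℝ) [IsFiniteMeasureOnCompacts μ] (x : ℝ)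
    {r : ℝ} (hr : r ≠ 0) (c : ℝ) : IsFiniteMeasureOnCompacts (blowupR μ x r c) := by
  let T : ℝ ≃ₜ ℝ := (Homeomorph.subRight x).trans (Homeomorph.mulRight₀ r⁻¹ (inv_ne_zero hr))
  have hT : (T : ℝ → ℝ) = fun y => (y - x) / r := rfl
  have := Measure.IsFiniteMeasureOnCompacts.map μ T
  rw [hT] at this
  exact IsFiniteMeasureOnCompacts.smul _ ENNReal.ofReal_ne_top

lemma map_div_sub_closedBall_zero_one (μ : Measure ℝ) (x : ℝ) {r : ℝ} (hr : 0 < r) :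
    μ.map (fun y => (y - x) / r) (closedBall 0 1) = μ (closedBall x r) := by
  rw [Measure.map_apply (by fun_prop) measurableSet_closedBall,
    preimage_div_sub_closedBall_zero_one x hr]

-- If `ν S` is `0` or `⊤`, both sides are the junk value `0`.
lemma integral_inv_measure_smul {α : Type*} [MeasurableSpace α] (ν : Measure α) (S : Set α)
    {c : ℝ≥0∞} (hc : c.toReal ≠ 0) (f : α → ℝ) :
    ∫ y, f y ∂((ν S)⁻¹ • ν) = (∫ y, f y ∂(c • ν)) / (c • ν).real S := by
  rw [integral_smul_measure, integral_smul_measure, measureReal_ennreal_smul_apply,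
    ENNReal.toReal_inv, smul_eq_mul, smul_eq_mul, mul_div_mul_left _ _ hc, inv_mul_eq_div,
    measureReal_def]

theorem stmt_8_general (μ : Measure ℝ) (hRadon : IsLocallyFiniteMeasure μ) (x : ℝ)
    (r c : ℕ → ℝ)
    (hrpos : ∀ i, 0 < r i)
    (hcpos : ∀ i, 0 < c i)
    (hconv : WeakTendstoR (fun i => blowupR μ x (r i) (c i)) heaviside) :
    ∃ φ : ℕ → ℕ, StrictMono φ ∧
      WeakTendstoR
        (fun j => (μ (closedBall x (r (φ j))))⁻¹ •
          Measure.map (fun y => (y - x) / r (φ j)) μ)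
        heaviside := by
  have hblowup := fun i => isFiniteMeasureOnCompacts_blowupR μ x (hrpos i).ne' (c i)
  have hmass :
      Tendsto (fun i => (blowupR μ x (r i) (c i)).real (closedBall 0 1)) atTop (𝓝 1) := by
    have := hconv.tendsto_measureReal_of_null_frontier isBounded_closedBall
      (by rw [frontier_closedBall']; exact heaviside_sphere 0 1)
    rwa [measureReal_def, heaviside_closedBall_zero_one, ENNReal.toReal_one] at this
  refine ⟨id, strictMono_id, fun φ hφ hφs => ?_⟩
  have hc (i : ℕ) : (ENNReal.ofReal (c i)).toReal ≠ 0 :=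
    (ENNReal.toReal_pos (ENNReal.ofReal_pos.2 (hcpos i)).ne' ENNReal.ofReal_ne_top).ne'
  have hlim := (hconv φ hφ hφs).div hmass one_ne_zero
  rw [div_one] at hlim
  refine hlim.congr fun i => ?_
  dsimp only [Pi.div_apply, id_eq]
  rw [← map_div_sub_closedBall_zero_one μ x (hrpos i)]
  exact (integral_inv_measure_smul _ _ (hc i) φ).symm

/-- if `μ` is a Radon measure on ℝ, `x ∈ spt μ`, and
`c_i T_{x,r_i♯}μ → L⁺` weakly for some `c_i > 0` and `r_i ↘ 0`, then along a subsequence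
`μ(B(x,r_{i_j}))⁻¹ T_{x,r_{i_j}♯}μ → L⁺` weakly. -/
theorem stmt_8 (μ : Measure ℝ) (hRadon : IsLocallyFiniteMeasure μ) (x : ℝ)
    (hx : x ∈ sptR μ) (r c : ℕ → ℝ)
    (hrpos : ∀ i, 0 < r i) (hranti : StrictAnti r) (hr0 : Tendsto r atTop (𝓝 0))
    (hcpos : ∀ i, 0 < c i)
    (hconv : WeakTendstoR (fun i => blowupR μ x (r i) (c i)) heaviside) :
    ∃ φ : ℕ → ℕ, StrictMono φ ∧
      WeakTendstoR
        (fun j => (μ (closedBall x (r (φ j))))⁻¹ •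
          Measure.map (fun y => (y - x) / r (φ j)) μ)
        heaviside :=
  stmt_8_general μ hRadon x r c hrpos hcpos hconv

end
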